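/- Let $n$ be a fixed integer and $q_1, q_2, q_3 \geq 1$, $a_1, a_2, a_3$ fixed integers. Define $b(q) := \sum_{a < q, (a,q)=1} c_1(a,q) c_2(a,q) c_3(a,q) e(-na/q)$, where $c_j(a,q)$ is the generalized Ramanujan sum. Then $b$ is multiplicative: if $(\bar{q},\tilde{q})=1$, then $b(\bar{q}\tilde{q}) = b(\bar{q}) b(\tilde{q})$. -/
import Mathlib


open Finset

/-- `e(x) = e^{2πix}`. -/
noncomputable def e (x : ℂ) : ℂ := Complex.exp (2 * Real.pi * Complex.I * x)

/-- The generalized Ramanujan sum. -/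
noncomputable def ramanujanC (aj : ℤ) (qj : ℕ) (a : ℤ) (q : ℕ) : ℂ :=
  ∑ k ∈ (Finset.Icc 1 q).filter
      (fun k => Nat.Coprime k q ∧ (k : ℤ) % (Nat.gcd qj q : ℤ) = aj % (Nat.gcd qj q : ℤ)),
    e ((a : ℂ) * k / q)

/-- `b(q) = ∑_{a < q, (a,q)=1} c₁(a,q) c₂(a,q) c₃(a,q) e(-na/q)`. -/
noncomputable def bfun (n a1 a2 a3 : ℤ) (q1 q2 q3 : ℕ) (q : ℕ) : ℂ :=
  ∑ a ∈ (Finset.range q).filter (fun a => Nat.Coprime a q),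
    ramanujanC a1 q1 (a : ℤ) q * ramanujanC a2 q2 (a : ℤ) q * ramanujanC a3 q3 (a : ℤ) q *
      e (-(n : ℂ) * a / q)

lemma e_add (x y : ℂ) : e (x + y) = e x * e y := by
  unfold e; rw [← Complex.exp_add]; ring_nf

lemma e_int (m : ℤ) : e (m : ℂ) = 1 := by
  unfold e
  rw [show (2 * (Real.pi:ℂ) * Complex.I * m) = m * (2 * Real.pi * Complex.I) by ring]
  exact Complex.exp_int_mul_two_pi_mul_I m

lemma e_congr {q : ℕ} (hq : q ≠ 0) {x y : ℤ} (h : x ≡ y [ZMOD (q:ℤ)]) :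
    e ((x : ℂ) / q) = e ((y : ℂ) / q) := by
  obtain ⟨m, hm⟩ := Int.ModEq.dvd h.symm
  have hqC : (q : ℂ) ≠ 0 := Nat.cast_ne_zero.mpr hq
  have : (x : ℂ) / q = (y : ℂ) / q + m := by
    field_simp
    push_cast [show (x : ℤ) = y + q * m by linarith]
    ring
  rw [this, e_add, e_int, mul_one]

lemma e_split {qb qt : ℕ} (hb : qb ≠ 0) (ht : qt ≠ 0) (x y : ℤ) :
    e (((x * qt + y * qb : ℤ) : ℂ) / (qb * qt : ℕ)) = e ((x : ℂ) / qb) * e ((y : ℂ) / qt) := by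
  rw [← e_add]
  congr 1
  have hbC : (qb : ℂ) ≠ 0 := Nat.cast_ne_zero.mpr hb
  have htC : (qt : ℂ) ≠ 0 := Nat.cast_ne_zero.mpr ht
  push_cast
  field_simp
  try ring

/-- Representative of `k` mod `q` in `[1, q]`. -/
def toRep (k q : ℕ) : ℕ := if k % q = 0 then q else k % q

lemma toRep_mem {k q : ℕ} (hq : q ≠ 0) : toRep k q ∈ Finset.Icc 1 q := by
  unfold toRep
  have := Nat.mod_lt k (Nat.pos_of_ne_zero hq)
  split <;> simp_all <;> omega

lemma toRep_modEq (k q : ℕ) : toRep k q ≡ k [MOD q] := by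
  unfold toRep
  split
  next h =>
    calc q ≡ 0 [MOD q] := (Nat.modEq_zero_iff_dvd).mpr dvd_rfl
      _ = k % q := h.symm
      _ ≡ k [MOD q] := Nat.mod_modEq k q
  next h => exact Nat.mod_modEq k q

lemma gcd_eq_of_modEq {a b n : ℕ} (h : a ≡ b [MOD n]) : Nat.gcd a n = Nat.gcd b n := by
  rw [Nat.gcd_comm a n, Nat.gcd_comm b n, Nat.gcd_rec n a, Nat.gcd_rec n b, h]

lemma coprime_of_modEq {a b n : ℕ} (h : a ≡ b [MOD n]) (hb : Nat.Coprime b n) :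
    Nat.Coprime a n := by
  unfold Nat.Coprime at *
  rw [gcd_eq_of_modEq h]; exact hb

lemma icc_eq_of_modEq {q a b : ℕ} (ha : a ∈ Finset.Icc 1 q) (hb : b ∈ Finset.Icc 1 q)
    (h : a ≡ b [MOD q]) : a = b := by
  simp only [Finset.mem_Icc] at ha hb
  have hd : (q : ℤ) ∣ (a : ℤ) - b := Int.ModEq.dvd (Int.natCast_modEq_iff.mpr h).symm
  have : (a : ℤ) - b = 0 := Int.eq_zero_of_abs_lt_dvd hd (abs_lt.mpr (by constructor <;> omega))
  omega

lemma mem_Kset_iff {aj : ℤ} {qj q k : ℕ} :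
    (k ∈ (Finset.Icc 1 q).filter
      (fun k => Nat.Coprime k q ∧ (k : ℤ) % (Nat.gcd qj q : ℤ) = aj % (Nat.gcd qj q : ℤ)))
    ↔ (k ∈ Finset.Icc 1 q ∧ Nat.Coprime k q ∧
        (k : ℤ) ≡ aj [ZMOD (Nat.gcd qj q : ℤ)]) := by
  simp only [Finset.mem_filter, Int.ModEq, and_assoc]

lemma ramanujanC_congr (aj : ℤ) (qj : ℕ) {a a' : ℤ} {q : ℕ} (hq : q ≠ 0)
    (h : a ≡ a' [ZMOD (q : ℤ)]) : ramanujanC aj qj a q = ramanujanC aj qj a' q := by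
  unfold ramanujanC
  refine Finset.sum_congr rfl fun k hk => ?_
  have h1 : (a : ℂ) * k / q = ((a * k : ℤ) : ℂ) / q := by push_cast; ring
  have h2 : (a' : ℂ) * k / q = ((a' * k : ℤ) : ℂ) / q := by push_cast; ring
  rw [h1, h2]
  exact e_congr hq (h.mul_right _)

lemma ramanujanC_mul (aj : ℤ) (qj : ℕ) {qb qt : ℕ} (hb : qb ≠ 0) (ht : qt ≠ 0)
    (hco : Nat.Coprime qb qt) (x y : ℤ) :
    ramanujanC aj qj (x * qt + y * qb) (qb * qt) =
      ramanujanC aj qj x qb * ramanujanC aj qj y qt := by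
  have hq : qb * qt ≠ 0 := Nat.mul_ne_zero hb ht
  have dsplit : Nat.gcd qj (qb * qt) = Nat.gcd qj qb * Nat.gcd qj qt :=
    Nat.Coprime.gcd_mul qj hco
  have dcop : (Nat.gcd qj qb).Coprime (Nat.gcd qj qt) :=
    Nat.Coprime.coprime_dvd_right (Nat.gcd_dvd_right qj qt)
      (Nat.Coprime.coprime_dvd_left (Nat.gcd_dvd_right qj qb) hco)
  unfold ramanujanC
  rw [Finset.sum_mul_sum, ← Finset.sum_product']
  refine Finset.sum_bij (fun k _ => (toRep k qb, toRep k qt)) ?_ ?_ ?_ ?_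
  · -- maps into product set
    intro k hk
    rw [mem_Kset_iff] at hk
    obtain ⟨hIcc, hcop, hmod⟩ := hk
    rw [Finset.mem_product, mem_Kset_iff, mem_Kset_iff]
    refine ⟨⟨toRep_mem hb, ?_, ?_⟩, toRep_mem ht, ?_, ?_⟩
    · exact coprime_of_modEq (toRep_modEq k qb)
        (Nat.Coprime.coprime_dvd_right (dvd_mul_right qb qt) hcop)
    · refine Int.ModEq.trans ?_ (hmod.of_dvd ?_)
      · exact (Int.natCast_modEq_iff.mpr (toRep_modEq k qb)).of_dvd
          (Int.natCast_dvd_natCast.mpr (Nat.gcd_dvd_right qj qb))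
      · exact Int.natCast_dvd_natCast.mpr (dsplit ▸ dvd_mul_right _ _)
    · exact coprime_of_modEq (toRep_modEq k qt)
        (Nat.Coprime.coprime_dvd_right (dvd_mul_left qt qb) hcop)
    · refine Int.ModEq.trans ?_ (hmod.of_dvd ?_)
      · exact (Int.natCast_modEq_iff.mpr (toRep_modEq k qt)).of_dvd
          (Int.natCast_dvd_natCast.mpr (Nat.gcd_dvd_right qj qt))
      · exact Int.natCast_dvd_natCast.mpr (dsplit ▸ dvd_mul_left _ _)
  · -- injective
    intro k hk k' hk' hEq
    rw [mem_Kset_iff] at hk hk'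
    have h1 : toRep k qb = toRep k' qb := congrArg Prod.fst hEq
    have h2 : toRep k qt = toRep k' qt := congrArg Prod.snd hEq
    have hb' : k ≡ k' [MOD qb] :=
      ((toRep_modEq k qb).symm.trans (h1 ▸ toRep_modEq k' qb))
    have ht' : k ≡ k' [MOD qt] :=
      ((toRep_modEq k qt).symm.trans (h2 ▸ toRep_modEq k' qt))
    exact icc_eq_of_modEq hk.1 hk'.1
      ((Nat.modEq_and_modEq_iff_modEq_mul hco).mp ⟨hb', ht'⟩)
  · -- surjective
    rintro ⟨kb, kt⟩ hp
    rw [Finset.mem_product, mem_Kset_iff, mem_Kset_iff] at hp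
    obtain ⟨⟨hbI, hbc, hbm⟩, htI, htc, htm⟩ := hp
    obtain ⟨k0, hk0b, hk0t⟩ := Nat.chineseRemainder hco kb kt
    set k := toRep k0 (qb * qt) with hkdef
    have hkb : k ≡ kb [MOD qb] :=
      (((toRep_modEq k0 (qb * qt)).of_dvd (dvd_mul_right qb qt)).trans hk0b)
    have hkt : k ≡ kt [MOD qt] :=
      (((toRep_modEq k0 (qb * qt)).of_dvd (dvd_mul_left qt qb)).trans hk0t)
    refine ⟨k, ?_, ?_⟩
    · rw [mem_Kset_iff]
      refine ⟨toRep_mem hq, ?_, ?_⟩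
      · exact Nat.Coprime.mul_right (coprime_of_modEq hkb hbc) (coprime_of_modEq hkt htc)
      · have h1 : (k : ℤ) ≡ aj [ZMOD (Nat.gcd qj qb : ℤ)] :=
          ((Int.natCast_modEq_iff.mpr hkb).of_dvd
            (Int.natCast_dvd_natCast.mpr (Nat.gcd_dvd_right qj qb))).trans hbm
        have h2 : (k : ℤ) ≡ aj [ZMOD (Nat.gcd qj qt : ℤ)] :=
          ((Int.natCast_modEq_iff.mpr hkt).of_dvd
            (Int.natCast_dvd_natCast.mpr (Nat.gcd_dvd_right qj qt))).trans htm
        have hd : ((Nat.gcd qj qb : ℤ)).natAbs.Coprime ((Nat.gcd qj qt : ℤ)).natAbs := by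
          simpa using dcop
        have := (Int.modEq_and_modEq_iff_modEq_mul hd).mp ⟨h1, h2⟩
        rw [dsplit]
        push_cast
        exact this
    · ext
      · exact icc_eq_of_modEq (toRep_mem hb) hbI
          ((toRep_modEq k qb).trans hkb)
      · exact icc_eq_of_modEq (toRep_mem ht) htI
          ((toRep_modEq k qt).trans hkt)
  · -- terms match
    intro k hk
    rw [mem_Kset_iff] at hk
    set kb := toRep k qb
    set kt := toRep k qt
    obtain ⟨mb, hmb⟩ := ((Int.natCast_modEq_iff.mpr (toRep_modEq k qb)).symm).dvd
    obtain ⟨mt, hmt⟩ := ((Int.natCast_modEq_iff.mpr (toRep_modEq k qt)).symm).dvd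
    have key : ((x * qt + y * qb) * k : ℤ) ≡ (x * kb) * qt + (y * kt) * qb
        [ZMOD ((qb * qt : ℕ) : ℤ)] := by
      rw [Int.modEq_iff_dvd]
      refine ⟨x * mb + y * mt, ?_⟩
      push_cast
      linear_combination (x * (qt : ℤ)) * hmb + (y * (qb : ℤ)) * hmt
    have h1 : ((x * qt + y * qb : ℤ) : ℂ) * k / (qb * qt : ℕ)
        = (((x * qt + y * qb) * k : ℤ) : ℂ) / ((qb * qt : ℕ) : ℂ) := by push_cast; ring
    have h2 : (x : ℂ) * kb / qb = ((x * kb : ℤ) : ℂ) / qb := by push_cast; ring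
    have h3 : (y : ℂ) * kt / qt = ((y * kt : ℤ) : ℂ) / qt := by push_cast; ring
    rw [h1, e_congr hq key, h2, h3, ← e_split hb ht (x * kb) (y * kt)]

lemma card_coprime_filter (q : ℕ) :
    ((Finset.range q).filter (fun a => Nat.Coprime a q)).card = Nat.totient q := by
  rw [Nat.totient]
  congr 1
  apply Finset.filter_congr
  intro x _
  simp [Nat.coprime_comm]

theorem stmt2 (n a1 a2 a3 : ℤ) (q1 q2 q3 : ℕ)
    (hq1 : 1 ≤ q1) (hq2 : 1 ≤ q2) (hq3 : 1 ≤ q3)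
    (qbar qtil : ℕ) (hqbar : 1 ≤ qbar) (hqtil : 1 ≤ qtil)
    (hco : Nat.Coprime qbar qtil) :
    bfun n a1 a2 a3 q1 q2 q3 (qbar * qtil) =
      bfun n a1 a2 a3 q1 q2 q3 qbar * bfun n a1 a2 a3 q1 q2 q3 qtil := by
  have hb : qbar ≠ 0 := by omega
  have ht : qtil ≠ 0 := by omega
  have hq : qbar * qtil ≠ 0 := Nat.mul_ne_zero hb ht
  have hqpos : 0 < qbar * qtil := Nat.pos_of_ne_zero hq
  -- basic congruences for the map
  have hmodb : ∀ p : ℕ × ℕ, p.1 * qtil + p.2 * qbar ≡ p.1 * qtil [MOD qbar] :=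
    fun p => Nat.add_mul_mod_self_right _ _ _
  have hmodt : ∀ p : ℕ × ℕ, p.1 * qtil + p.2 * qbar ≡ p.2 * qbar [MOD qtil] := by
    intro p
    show _ % _ = _ % _
    rw [add_comm]
    exact Nat.add_mul_mod_self_right _ _ _
  have hmapco : ∀ p : ℕ × ℕ, Nat.Coprime p.1 qbar → Nat.Coprime p.2 qtil →
      Nat.Coprime ((p.1 * qtil + p.2 * qbar) % (qbar * qtil)) (qbar * qtil) := by
    intro p h1 h2
    apply coprime_of_modEq (Nat.mod_modEq _ _)
    exact Nat.Coprime.mul_right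
      (coprime_of_modEq (hmodb p) (Nat.Coprime.mul h1 hco.symm))
      (coprime_of_modEq (hmodt p) (Nat.Coprime.mul h2 hco))
  unfold bfun
  rw [Finset.sum_mul_sum, ← Finset.sum_product']
  have hmapsto : ∀ p ∈ ((Finset.range qbar).filter (fun a => Nat.Coprime a qbar)) ×ˢ
      ((Finset.range qtil).filter (fun a => Nat.Coprime a qtil)),
      (p.1 * qtil + p.2 * qbar) % (qbar * qtil) ∈
        (Finset.range (qbar * qtil)).filter (fun a => Nat.Coprime a (qbar * qtil)) := by
    intro p hp
    rw [Finset.mem_product, Finset.mem_filter, Finset.mem_filter] at hp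
    rw [Finset.mem_filter, Finset.mem_range]
    exact ⟨Nat.mod_lt _ hqpos, hmapco p hp.1.2 hp.2.2⟩
  have hinj : ∀ p ∈ ((Finset.range qbar).filter (fun a => Nat.Coprime a qbar)) ×ˢ
      ((Finset.range qtil).filter (fun a => Nat.Coprime a qtil)),
      ∀ p' ∈ ((Finset.range qbar).filter (fun a => Nat.Coprime a qbar)) ×ˢ
      ((Finset.range qtil).filter (fun a => Nat.Coprime a qtil)),
      (p.1 * qtil + p.2 * qbar) % (qbar * qtil) = (p'.1 * qtil + p'.2 * qbar) % (qbar * qtil)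
        → p = p' := by
    intro p hp p' hp' hEq
    rw [Finset.mem_product, Finset.mem_filter, Finset.mem_filter, Finset.mem_range,
      Finset.mem_range] at hp hp'
    have hmm : p.1 * qtil + p.2 * qbar ≡ p'.1 * qtil + p'.2 * qbar [MOD qbar * qtil] := by
      have := (Nat.mod_modEq (p.1 * qtil + p.2 * qbar) (qbar * qtil)).symm.trans
        ((hEq ▸ Nat.mod_modEq (p'.1 * qtil + p'.2 * qbar) (qbar * qtil)) : _)
      exact this
    have h1 : p.1 ≡ p'.1 [MOD qbar] := by
      have := ((hmodb p).symm.trans (hmm.of_dvd (dvd_mul_right qbar qtil))).trans (hmodb p')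
      exact Nat.ModEq.cancel_right_of_coprime hco this
    have h2 : p.2 ≡ p'.2 [MOD qtil] := by
      have := ((hmodt p).symm.trans (hmm.of_dvd (dvd_mul_left qtil qbar))).trans (hmodt p')
      exact Nat.ModEq.cancel_right_of_coprime hco.symm this
    have e1 : p.1 = p'.1 := by
      have := h1
      unfold Nat.ModEq at this
      rwa [Nat.mod_eq_of_lt hp.1.1, Nat.mod_eq_of_lt hp'.1.1] at this
    have e2 : p.2 = p'.2 := by
      have := h2
      unfold Nat.ModEq at this
      rwa [Nat.mod_eq_of_lt hp.2.1, Nat.mod_eq_of_lt hp'.2.1] at this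
    exact Prod.ext e1 e2
  refine (Finset.sum_bij (fun p _ => (p.1 * qtil + p.2 * qbar) % (qbar * qtil))
    hmapsto (fun p hp p' hp' => hinj p hp p' hp') ?_ ?_).symm
  · -- surjectivity via cardinality
    intro b hbmem
    obtain ⟨a, ha, hab⟩ := Finset.surj_on_of_inj_on_of_card_le
      (fun p (_ : p ∈ ((Finset.range qbar).filter (fun a => Nat.Coprime a qbar)) ×ˢ
        ((Finset.range qtil).filter (fun a => Nat.Coprime a qtil)))
        => (p.1 * qtil + p.2 * qbar) % (qbar * qtil))
      hmapsto (fun p p' hp hp' => hinj p hp p' hp')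
      (by
        rw [Finset.card_product, card_coprime_filter, card_coprime_filter,
          card_coprime_filter, Nat.totient_mul hco])
      b hbmem
    exact ⟨a, ha, hab.symm⟩
  · -- terms match
    rintro ⟨ab, at'⟩ hp
    rw [Finset.mem_product, Finset.mem_filter, Finset.mem_filter] at hp
    set m : ℕ := ab * qtil + at' * qbar with hm
    have hcongr : ((m % (qbar * qtil) : ℕ) : ℤ) ≡ (ab : ℤ) * qtil + (at' : ℤ) * qbar
        [ZMOD ((qbar * qtil : ℕ) : ℤ)] := by
      have := Int.natCast_modEq_iff.mpr (Nat.mod_modEq m (qbar * qtil))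
      calc ((m % (qbar * qtil) : ℕ) : ℤ) ≡ (m : ℤ) [ZMOD ((qbar * qtil : ℕ) : ℤ)] := this
        _ = (ab : ℤ) * qtil + (at' : ℤ) * qbar := by rw [hm]; push_cast; ring
    have hcmul : ∀ aj : ℤ, ∀ qj : ℕ,
        ramanujanC aj qj ((m % (qbar * qtil) : ℕ) : ℤ) (qbar * qtil) =
          ramanujanC aj qj (ab : ℤ) qbar * ramanujanC aj qj (at' : ℤ) qtil := by
      intro aj qj
      rw [ramanujanC_congr aj qj hq hcongr]
      exact ramanujanC_mul aj qj hb ht hco (ab : ℤ) (at' : ℤ)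
    have hefac : ∀ A : ℕ, ((A : ℤ) ≡ (ab : ℤ) * qtil + (at' : ℤ) * qbar
        [ZMOD ((qbar * qtil : ℕ) : ℤ)]) →
        e (-(n : ℂ) * (A : ℂ) / ((qbar * qtil : ℕ) : ℂ)) =
        e (-(n : ℂ) * (ab : ℂ) / (qbar : ℂ)) * e (-(n : ℂ) * (at' : ℂ) / (qtil : ℂ)) := by
      intro A hA
      have h1 : -(n : ℂ) * (A : ℂ) / ((qbar * qtil : ℕ) : ℂ)
          = ((-(n * A) : ℤ) : ℂ) / ((qbar * qtil : ℕ) : ℂ) := by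
        push_cast; ring
      have key : (-(n * A) : ℤ) ≡
          (-(n * ab)) * qtil + (-(n * at')) * qbar [ZMOD ((qbar * qtil : ℕ) : ℤ)] := by
        calc (-(n * A) : ℤ)
            ≡ -(n * ((ab : ℤ) * qtil + (at' : ℤ) * qbar)) [ZMOD ((qbar * qtil : ℕ) : ℤ)] :=
              (hA.mul_left n).neg
          _ = (-(n * ab)) * qtil + (-(n * at')) * qbar := by ring
      have h2 : -(n : ℂ) * (ab : ℂ) / (qbar : ℂ) = (((-(n * ab)) : ℤ) : ℂ) / qbar := by
        push_cast; ring
      have h3 : -(n : ℂ) * (at' : ℂ) / (qtil : ℂ) = (((-(n * at')) : ℤ) : ℂ) / qtil := by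
        push_cast; ring
      rw [h1, e_congr hq key, h2, h3, ← e_split hb ht (-(n * ab)) (-(n * at'))]
    rw [hcmul a1 q1, hcmul a2 q2, hcmul a3 q3, hefac _ hcongr]
    ring
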